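/- Let H be a complex Hilbert space, 𝔩(H) the HP algebra on H, and 𝒜 ⊆ B(H) a subalgebra closed under adjoints containing an element E with E* = E and A∘E = A = E∘A for every A ∈ 𝒜. Then every a = (α, ζ, η, A) ∈ 𝔩(H) with A ∈ 𝒜 decomposes as a = b + c, where b := (0, ζ − Eζ, η − Eη, 0) and c := (α, Eζ, Eη, A), and this decomposition is orthogonal: b·c = 0 and c·b = 0 in 𝔩(H). Moreover, any two elements b₁ = (0,ζ₁,η₁,0), b₂ = (0,ζ₂,η₂,0) with Eζᵢ = 0 = Eηᵢ satisfy b₁·b₂ = ⟪η₁,ζ₂⟫·d_t (a quantum Brownian part), and the set 𝔠 := {(β, ξ, θ, B) : Eξ = ξ, Eθ = θ, B ∈ 𝒜} is closed under the product and the involution of 𝔩(H) (a quantum Lévy part). -/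

import Mathlib

open ComplexOrder

/-- The product of the HP (vacuum) Itô algebra `𝔩(H) = ℂ × H × H × B(H)`:
`(α,ζ,η,A)·(β,ζ',η',B) = (⟪η,ζ'⟫, Aζ', B*η, A∘B)`. -/
noncomputable def hpMul {H : Type} [NormedAddCommGroup H] [InnerProductSpace ℂ H]
    [CompleteSpace H] (a b : ℂ × H × H × (H →L[ℂ] H)) : ℂ × H × H × (H →L[ℂ] H) :=
  ((inner ℂ a.2.2.1 b.2.1 : ℂ), a.2.2.2 b.2.1,
    (ContinuousLinearMap.adjoint b.2.2.2) a.2.2.1, a.2.2.2.comp b.2.2.2)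

/-- The involution of the HP algebra: `(α,ζ,η,A)⋆ = (conj α, η, ζ, A*)`. -/
noncomputable def hpStar {H : Type} [NormedAddCommGroup H] [InnerProductSpace ℂ H]
    [CompleteSpace H] (a : ℂ × H × H × (H →L[ℂ] H)) : ℂ × H × H × (H →L[ℂ] H) :=
  (starRingEnd ℂ a.1, a.2.2.1, a.2.1, ContinuousLinearMap.adjoint a.2.2.2)

/-- The death element `d_t = (1,0,0,0)` of the HP algebra. -/
def hpDt (H : Type) [NormedAddCommGroup H] [InnerProductSpace ℂ H] [CompleteSpace H] :
    ℂ × H × H × (H →L[ℂ] H) := (1, 0, 0, 0)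


/-!
The Lévy support `ran E` and the Brownian support `ker E` of the self-adjoint idempotent `E` are
orthogonal, and `E` absorbs every operator of `𝒜` from both sides. Hence the vector entries of a
product of a Brownian and a Lévy element pair `ker E` with `ran E` or feed `ker E` into an
operator of `𝒜`, and all of them vanish; products of Lévy elements stay in `ran E` and `𝒜`.
-/

open ContinuousLinearMap

theorem apply_sub_apply_eq_zero_of_comp_eq {R M : Type*} [Ring R] [TopologicalSpace M]
    [AddCommGroup M] [Module R M] {A E : M →L[R] M} (hAE : A.comp E = A) (x : M) :
    A (x - E x) = 0 := by
  rw [map_sub, ← comp_apply A E, hAE, sub_self]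

section Projection

variable {𝕜 H : Type*} [RCLike 𝕜] [NormedAddCommGroup H] [InnerProductSpace 𝕜 H]
  [CompleteSpace H] {E : H →L[𝕜] H}

theorem inner_sub_apply_apply_eq_zero (hEsa : adjoint E = E) (hEE : E.comp E = E) (x y : H) :
    inner 𝕜 (x - E x) (E y) = 0 := by
  have hEx : E (E x) = E x := congr($hEE x)
  rw [← hEsa, adjoint_inner_right, hEsa, map_sub, hEx, sub_self, inner_zero_left]

theorem inner_apply_sub_apply_eq_zero (hEsa : adjoint E = E) (hEE : E.comp E = E) (x y : H) :
    inner 𝕜 (E x) (y - E y) = 0 :=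
  inner_eq_zero_symm.mp (inner_sub_apply_apply_eq_zero hEsa hEE y x)

end Projection

section HPAlgebra

variable {H : Type} [NormedAddCommGroup H] [InnerProductSpace ℂ H] [CompleteSpace H]
  {E : H →L[ℂ] H}

/-- The quantum Lévy part `𝔠` of the HP algebra. -/
def levyPart (E : H →L[ℂ] H) (𝒜 : Set (H →L[ℂ] H)) : Set (ℂ × H × H × (H →L[ℂ] H)) :=
  {a | E a.2.1 = a.2.1 ∧ E a.2.2.1 = a.2.2.1 ∧ a.2.2.2 ∈ 𝒜}

theorem hpMul_brownian_levy_eq_zero (hEsa : adjoint E = E) (hEE : E.comp E = E)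
    {A : H →L[ℂ] H} (hEA : E.comp A = A) (α : ℂ) (ζ η ζ' η' : H) :
    hpMul ((0 : ℂ), ζ - E ζ, η - E η, (0 : H →L[ℂ] H)) (α, E ζ', E η', A) = 0 := by
  have hAadjE : (adjoint A).comp E = adjoint A := by
    rw [← hEsa, ← adjoint_comp, hEA]
  simp only [hpMul, inner_sub_apply_apply_eq_zero hEsa hEE,
    apply_sub_apply_eq_zero_of_comp_eq hAadjE, zero_apply, zero_comp]
  rfl

theorem hpMul_levy_brownian_eq_zero (hEsa : adjoint E = E) (hEE : E.comp E = E)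
    {A : H →L[ℂ] H} (hAE : A.comp E = A) (α : ℂ) (ζ η ζ' η' : H) :
    hpMul (α, E ζ', E η', A) ((0 : ℂ), ζ - E ζ, η - E η, (0 : H →L[ℂ] H)) = 0 := by
  simp only [hpMul, inner_apply_sub_apply_eq_zero hEsa hEE,
    apply_sub_apply_eq_zero_of_comp_eq hAE, map_zero, zero_apply, comp_zero]
  rfl

theorem hpMul_brownian_brownian (ζ₁ η₁ ζ₂ η₂ : H) :
    hpMul ((0 : ℂ), ζ₁, η₁, (0 : H →L[ℂ] H)) ((0 : ℂ), ζ₂, η₂, (0 : H →L[ℂ] H))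
      = (inner ℂ η₁ ζ₂ : ℂ) • hpDt H := by
  simp [hpMul, hpDt]

variable {𝒜 : Set (H →L[ℂ] H)}

theorem hpMul_mem_levyPart (hcomp : ∀ A B, A ∈ 𝒜 → B ∈ 𝒜 → A.comp B ∈ 𝒜)
    (hadj : ∀ A, A ∈ 𝒜 → adjoint A ∈ 𝒜) (hEA : ∀ A, A ∈ 𝒜 → E.comp A = A)
    {a b : ℂ × H × H × (H →L[ℂ] H)} (ha : a ∈ levyPart E 𝒜) (hb : b ∈ levyPart E 𝒜) :
    hpMul a b ∈ levyPart E 𝒜 :=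
  ⟨congr($(hEA _ ha.2.2) b.2.1), congr($(hEA _ (hadj _ hb.2.2)) a.2.2.1),
    hcomp _ _ ha.2.2 hb.2.2⟩

theorem hpStar_mem_levyPart (hadj : ∀ A, A ∈ 𝒜 → adjoint A ∈ 𝒜)
    {a : ℂ × H × H × (H →L[ℂ] H)} (ha : a ∈ levyPart E 𝒜) : hpStar a ∈ levyPart E 𝒜 :=
  ⟨ha.2.1, ha.1, hadj _ ha.2.2⟩

end HPAlgebra

theorem hp_brownian_levy_decomposition_general
    (H : Type) [NormedAddCommGroup H] [InnerProductSpace ℂ H] [CompleteSpace H]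
    (𝒜 : Set (H →L[ℂ] H))
    (hcomp : ∀ A B, A ∈ 𝒜 → B ∈ 𝒜 → A.comp B ∈ 𝒜)
    (hadj : ∀ A, A ∈ 𝒜 → ContinuousLinearMap.adjoint A ∈ 𝒜)
    (E : H →L[ℂ] H) (hE : E ∈ 𝒜) (hEsa : ContinuousLinearMap.adjoint E = E)
    (hunit : ∀ A, A ∈ 𝒜 → A.comp E = A ∧ E.comp A = A) :
    (∀ (α : ℂ) (ζ η : H) (A : H →L[ℂ] H), A ∈ 𝒜 →
      ((α, ζ, η, A) : ℂ × H × H × (H →L[ℂ] H))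
          = ((0 : ℂ), ζ - E ζ, η - E η, (0 : H →L[ℂ] H)) + (α, E ζ, E η, A) ∧
      hpMul ((0 : ℂ), ζ - E ζ, η - E η, (0 : H →L[ℂ] H)) (α, E ζ, E η, A) = 0 ∧
      hpMul (α, E ζ, E η, A) ((0 : ℂ), ζ - E ζ, η - E η, (0 : H →L[ℂ] H)) = 0) ∧
    (∀ ζ₁ η₁ ζ₂ η₂ : H, E ζ₁ = 0 → E η₁ = 0 → E ζ₂ = 0 → E η₂ = 0 →
      hpMul ((0 : ℂ), ζ₁, η₁, (0 : H →L[ℂ] H)) ((0 : ℂ), ζ₂, η₂, (0 : H →L[ℂ] H))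
        = (inner ℂ η₁ ζ₂ : ℂ) • hpDt H) ∧
    (∀ a b : ℂ × H × H × (H →L[ℂ] H),
      (E a.2.1 = a.2.1 ∧ E a.2.2.1 = a.2.2.1 ∧ a.2.2.2 ∈ 𝒜) →
      (E b.2.1 = b.2.1 ∧ E b.2.2.1 = b.2.2.1 ∧ b.2.2.2 ∈ 𝒜) →
      (E (hpMul a b).2.1 = (hpMul a b).2.1 ∧ E (hpMul a b).2.2.1 = (hpMul a b).2.2.1 ∧
        (hpMul a b).2.2.2 ∈ 𝒜) ∧
      (E (hpStar a).2.1 = (hpStar a).2.1 ∧ E (hpStar a).2.2.1 = (hpStar a).2.2.1 ∧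
        (hpStar a).2.2.2 ∈ 𝒜)) := by
  have hEE : E.comp E = E := (hunit E hE).1
  refine ⟨fun α ζ η A hA => ⟨?_, ?_, ?_⟩,
    fun ζ₁ η₁ ζ₂ η₂ _ _ _ _ => hpMul_brownian_brownian ζ₁ η₁ ζ₂ η₂, fun a b ha hb => ⟨?_, ?_⟩⟩
  · simp
  · exact hpMul_brownian_levy_eq_zero hEsa hEE (hunit A hA).2 α ζ η ζ η
  · exact hpMul_levy_brownian_eq_zero hEsa hEE (hunit A hA).1 α ζ η ζ η
  · exact hpMul_mem_levyPart hcomp hadj (fun A hA => (hunit A hA).2) ha hb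
  · exact hpStar_mem_levyPart hadj ha

/-- Let `𝒜 ⊆ B(H)` be an adjoint-closed subalgebra with a self-adjoint
unit `E` (`A∘E = A = E∘A` on `𝒜`). Then every `a = (α,ζ,η,A)` with `A ∈ 𝒜` decomposes
orthogonally as `a = b + c` with `b = (0, ζ−Eζ, η−Eη, 0)`, `c = (α, Eζ, Eη, A)`,
`b·c = 0 = c·b`; elements supported outside `E` multiply as a quantum Brownian part
(`b₁·b₂ = ⟪η₁,ζ₂⟫·d_t`), and the Lévy part
`𝔠 = {(β,ξ,θ,B) : Eξ = ξ, Eθ = θ, B ∈ 𝒜}` is closed under product and involution. -/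
theorem hp_brownian_levy_decomposition
    (H : Type) [NormedAddCommGroup H] [InnerProductSpace ℂ H] [CompleteSpace H]
    (𝒜 : Set (H →L[ℂ] H))
    (hadd : ∀ A B, A ∈ 𝒜 → B ∈ 𝒜 → A + B ∈ 𝒜)
    (hsmul : ∀ (z : ℂ) (A), A ∈ 𝒜 → z • A ∈ 𝒜)
    (hcomp : ∀ A B, A ∈ 𝒜 → B ∈ 𝒜 → A.comp B ∈ 𝒜)
    (hadj : ∀ A, A ∈ 𝒜 → ContinuousLinearMap.adjoint A ∈ 𝒜)
    (E : H →L[ℂ] H) (hE : E ∈ 𝒜) (hEsa : ContinuousLinearMap.adjoint E = E)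
    (hunit : ∀ A, A ∈ 𝒜 → A.comp E = A ∧ E.comp A = A) :
    (∀ (α : ℂ) (ζ η : H) (A : H →L[ℂ] H), A ∈ 𝒜 →
      ((α, ζ, η, A) : ℂ × H × H × (H →L[ℂ] H))
          = ((0 : ℂ), ζ - E ζ, η - E η, (0 : H →L[ℂ] H)) + (α, E ζ, E η, A) ∧
      hpMul ((0 : ℂ), ζ - E ζ, η - E η, (0 : H →L[ℂ] H)) (α, E ζ, E η, A) = 0 ∧
      hpMul (α, E ζ, E η, A) ((0 : ℂ), ζ - E ζ, η - E η, (0 : H →L[ℂ] H)) = 0) ∧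
    (∀ ζ₁ η₁ ζ₂ η₂ : H, E ζ₁ = 0 → E η₁ = 0 → E ζ₂ = 0 → E η₂ = 0 →
      hpMul ((0 : ℂ), ζ₁, η₁, (0 : H →L[ℂ] H)) ((0 : ℂ), ζ₂, η₂, (0 : H →L[ℂ] H))
        = (inner ℂ η₁ ζ₂ : ℂ) • hpDt H) ∧
    (∀ a b : ℂ × H × H × (H →L[ℂ] H),
      (E a.2.1 = a.2.1 ∧ E a.2.2.1 = a.2.2.1 ∧ a.2.2.2 ∈ 𝒜) →
      (E b.2.1 = b.2.1 ∧ E b.2.2.1 = b.2.2.1 ∧ b.2.2.2 ∈ 𝒜) →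
      (E (hpMul a b).2.1 = (hpMul a b).2.1 ∧ E (hpMul a b).2.2.1 = (hpMul a b).2.2.1 ∧
        (hpMul a b).2.2.2 ∈ 𝒜) ∧
      (E (hpStar a).2.1 = (hpStar a).2.1 ∧ E (hpStar a).2.2.1 = (hpStar a).2.2.1 ∧
        (hpStar a).2.2.2 ∈ 𝒜)) :=
  hp_brownian_levy_decomposition_general H 𝒜 hcomp hadj E hE hEsa hunit
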